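/- Let t ≥ 2 and let F be a connected graph. Suppose G is a ((t−1)/2)-regular F-free graph on m vertices (t odd). Construct the 3-uniform hypergraph H on ⌊n/m⌋ disjoint m-sets A_1, …, A_{⌊n/m⌋}, each carrying a copy of G, whose hyperedges are all triples consisting of an edge of the copy of G inside one A_i together with one vertex of a different A_j. Then every pair of vertices lying in different parts is contained in exactly t−1 hyperedges, the t-heavy pairs form vertex-disjoint copies of G, and hence H contains no t-heavy copy of F. -/

import Mathlib

/-!
A hyperedge through two vertices `u`, `v` of different parts is `{u, v, w}` with `w` a
`G`-neighbour of `u` in the part of `u` or of `v` in the part of `v`, so such a pair lies in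
`deg u + deg v = t - 1` hyperedges. Two vertices of one part lie in a common hyperedge only if
they are `G`-adjacent, and then in `(p - 1) m ≥ t` of them. So the `t`-heavy pairs are exactly
the edges of the `p` disjoint copies of `G`, and a `t`-heavy copy of the connected graph `F`
would lie inside a single copy of `G`.
-/

open Finset

/-- `H` contains a `t`-heavy copy of the graph `F`: an injective placement of `V(F)`
such that every edge of `F` is contained in at least `t` hyperedges of `H`. -/
def HasHeavyCopy {V α : Type*} [DecidableEq V] (H : Finset (Finset V))
    (F : SimpleGraph α) (t : ℕ) : Prop :=
  ∃ i : α ↪ V, ∀ x y, F.Adj x y →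
    t ≤ (H.filter (fun A => i x ∈ A ∧ i y ∈ A)).card

/-- `H` contains a `t`-wise Berge copy of the graph `F`: an injective placement of `V(F)`
together with `t` hyperedges assigned to each edge of `F`, pairwise disjoint over distinct
edges, each containing both endpoints of its edge. -/
def HasBergeCopy {V α : Type*} (H : Finset (Finset V))
    (F : SimpleGraph α) (t : ℕ) : Prop :=
  ∃ (i : α ↪ V) (h : Sym2 α → Finset (Finset V)),
    (∀ e ∈ F.edgeSet, h e ⊆ H ∧ (h e).card = t ∧ ∀ A ∈ h e, ∀ x ∈ e, i x ∈ A) ∧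
    ∀ e ∈ F.edgeSet, ∀ e' ∈ F.edgeSet, e ≠ e' → Disjoint (h e) (h e')

/-- The Turán number of `t`-heavy copies of `F` for `r`-uniform hypergraphs on `n` vertices. -/
noncomputable def exHeavy {α : Type*} (n r t : ℕ) (F : SimpleGraph α) : ℕ :=
  sSup {m | ∃ H : Finset (Finset (Fin n)), (∀ A ∈ H, A.card = r) ∧
    ¬ HasHeavyCopy H F t ∧ H.card = m}

/-- The Turán number of `t`-wise Berge copies of `F` for `r`-uniform hypergraphs on `n` vertices. -/
noncomputable def exBerge {α : Type*} (n r t : ℕ) (F : SimpleGraph α) : ℕ :=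
  sSup {m | ∃ H : Finset (Finset (Fin n)), (∀ A ∈ H, A.card = r) ∧
    ¬ HasBergeCopy H F t ∧ H.card = m}

/-- `G` contains a copy of `F` as a subgraph. -/
def GraphContains {α β : Type*} (F : SimpleGraph α) (G : SimpleGraph β) : Prop :=
  ∃ f : α ↪ β, ∀ x y, F.Adj x y → G.Adj (f x) (f y)

/-- The number of `r`-cliques of `G`. -/
noncomputable def cliqueCount {β : Type*} [Fintype β] [DecidableEq β]
    (r : ℕ) (G : SimpleGraph β) : ℕ :=
  letI := Classical.decRel G.Adj
  (G.cliqueFinset r).card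

/-- The number of edges of `G`. -/
noncomputable def edgeCount {β : Type*} [Fintype β] [DecidableEq β] (G : SimpleGraph β) : ℕ :=
  letI := Classical.decRel G.Adj
  G.edgeFinset.card

/-- The generalized Turán number `ex(n, K_r, F)`. -/
noncomputable def exClique {α : Type*} (n r : ℕ) (F : SimpleGraph α) : ℕ :=
  sSup {m | ∃ G : SimpleGraph (Fin n), ¬ GraphContains F G ∧ cliqueCount r G = m}

/-- The Turán number `ex(n, F)`. -/
noncomputable def exTuran {α : Type*} (n : ℕ) (F : SimpleGraph α) : ℕ :=
  sSup {m | ∃ G : SimpleGraph (Fin n), ¬ GraphContains F G ∧ edgeCount G = m}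

/-- The construction on `p` parts of size `m`: all triples made of an edge of the copy of
`G` inside one part together with one vertex of a different part. -/
def conH2 (p m : ℕ) (G : SimpleGraph (Fin m)) [DecidableRel G.Adj] :
    Finset (Finset (Fin p × Fin m)) :=
  ((Finset.univ : Finset (Fin p × Fin m)).powersetCard 3).filter
    (fun B => ∃ i j : Fin p, ∃ a b c : Fin m, i ≠ j ∧ G.Adj a b ∧
      B = {(i, a), (i, b), (j, c)})

theorem Finset.pairwise_ne_of_card_eq_three {V : Type*} [DecidableEq V] {u v w : V}
    (h : #({u, v, w} : Finset V) = 3) : u ≠ v ∧ u ≠ w ∧ v ≠ w := by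
  grind [card_insert_eq_ite]

def codegree {V : Type*} [DecidableEq V] (H : Finset (Finset V)) (u v : V) : ℕ :=
  #(H.filter fun A => u ∈ A ∧ v ∈ A)

theorem codegree_eq_card_filter_insert {V : Type*} [Fintype V] [DecidableEq V]
    {H : Finset (Finset V)} (hH : ∀ A ∈ H, #A = 3) {u v : V} (huv : u ≠ v) :
    codegree H u v = #(univ.filter fun w => {u, v, w} ∈ H) := by
  have hthird_ne : ∀ w, {u, v, w} ∈ H → w ≠ u ∧ w ≠ v := fun w hw =>
    have := pairwise_ne_of_card_eq_three (hH _ hw); ⟨this.2.1.symm, this.2.2.symm⟩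
  have himage : H.filter (fun A => u ∈ A ∧ v ∈ A) =
      (univ.filter fun w => {u, v, w} ∈ H).image fun w => {u, v, w} := by
    ext A
    simp only [mem_filter, mem_image, mem_univ, true_and]
    constructor
    · rintro ⟨hA, hu, hv⟩
      obtain ⟨w, hw⟩ : (A \ {u, v}).Nonempty := by
        rw [← card_pos, card_sdiff_of_subset (by grind), hH A hA, card_pair huv]
        norm_num
      have hsub : {u, v, w} ⊆ A := by grind
      have hcard : #A ≤ #({u, v, w} : Finset V) := by
        rw [hH A hA, card_insert_of_notMem (by grind), card_pair (by grind)]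
      exact ⟨w, (eq_of_subset_of_card_le hsub hcard) ▸ hA, eq_of_subset_of_card_le hsub hcard⟩
    · rintro ⟨w, hw, rfl⟩
      simp [hw]
  rw [codegree, himage, card_image_of_injOn]
  intro w₁ hw₁ w₂ _ h
  have hne₁ := hthird_ne w₁ (mem_filter.mp hw₁).2
  have : w₁ ∈ ({u, v, w₂} : Finset V) := by
    rw [← show ({u, v, w₁} : Finset V) = {u, v, w₂} from h]
    simp
  grind

theorem graphContains_of_connected_of_embedding_prod {α ι β : Type*} {F : SimpleGraph α}
    (hF : F.Connected) {G : SimpleGraph β} (f : α ↪ ι × β)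
    (hf : ∀ x y, F.Adj x y → (f x).1 = (f y).1 ∧ G.Adj (f x).2 (f y).2) : GraphContains F G := by
  have hfst : ∀ x y, F.Reachable x y → (f x).1 = (f y).1 := by
    rintro x y ⟨w⟩
    induction w with
    | nil => rfl
    | cons hadj _ ih => exact (hf _ _ hadj).1.trans ih
  refine ⟨⟨fun x => (f x).2, fun x y hxy => f.injective ?_⟩, fun x y hxy => (hf x y hxy).2⟩
  exact Prod.ext (hfst x y (hF.preconnected x y)) hxy

section conH2

variable {p m : ℕ} {G : SimpleGraph (Fin m)} [DecidableRel G.Adj]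

theorem card_of_mem_conH2 {B : Finset (Fin p × Fin m)} (hB : B ∈ conH2 p m G) : #B = 3 :=
  mem_powersetCard_univ.mp (mem_filter.mp hB).1

theorem insert_mem_conH2 {i j : Fin p} {a b : Fin m} (hij : i ≠ j) (hab : G.Adj a b) (c : Fin m) :
    {(i, a), (i, b), (j, c)} ∈ conH2 p m G := by
  refine mem_filter.mpr ⟨mem_powersetCard_univ.mpr ?_, i, j, a, b, c, hij, hab, rfl⟩
  grind [card_insert_eq_ite, hab.ne]

theorem insert_mem_conH2_iff {u v w : Fin p × Fin m} :
    {u, v, w} ∈ conH2 p m G ↔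
      (u.1 = v.1 ∧ G.Adj u.2 v.2 ∧ u.1 ≠ w.1) ∨ (u.1 = w.1 ∧ G.Adj u.2 w.2 ∧ u.1 ≠ v.1) ∨
        (v.1 = w.1 ∧ G.Adj v.2 w.2 ∧ v.1 ≠ u.1) := by
  constructor
  · unfold conH2
    rw [mem_filter, mem_powersetCard_univ]
    rintro ⟨hcard, i, j, a, b, c, hij, hab, h⟩
    have := pairwise_ne_of_card_eq_three hcard
    have hu : u ∈ ({(i, a), (i, b), (j, c)} : Finset _) := h ▸ by simp
    have hv : v ∈ ({(i, a), (i, b), (j, c)} : Finset _) := h ▸ by simp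
    have hw : w ∈ ({(i, a), (i, b), (j, c)} : Finset _) := h ▸ by simp
    have ha : ((i, a) : Fin p × Fin m) ∈ ({u, v, w} : Finset _) := h ▸ by simp
    have hb : ((i, b) : Fin p × Fin m) ∈ ({u, v, w} : Finset _) := h ▸ by simp
    simp only [mem_insert, mem_singleton] at hu hv hw ha hb
    have := hab.symm
    grind
  · obtain ⟨i, a⟩ := u; obtain ⟨i', b⟩ := v; obtain ⟨j, c⟩ := w
    rintro (⟨rfl, hadj, hij⟩ | ⟨rfl, hadj, hij⟩ | ⟨rfl, hadj, hij⟩)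
    · exact insert_mem_conH2 hij hadj c
    · rw [pair_comm]
      exact insert_mem_conH2 hij hadj b
    · rw [insert_comm, pair_comm]
      exact insert_mem_conH2 hij hadj a

theorem codegree_conH2_of_fst_ne {u v : Fin p × Fin m} (h : u.1 ≠ v.1) :
    codegree (conH2 p m G) u v = G.degree u.2 + G.degree v.2 := by
  have hthird : univ.filter (fun w => {u, v, w} ∈ conH2 p m G) =
      {u.1} ×ˢ G.neighborFinset u.2 ∪ {v.1} ×ˢ G.neighborFinset v.2 := by
    ext w
    simp only [mem_filter, mem_univ, true_and, insert_mem_conH2_iff, mem_union, mem_product,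
      mem_singleton, SimpleGraph.mem_neighborFinset]
    grind
  rw [codegree_eq_card_filter_insert (fun _ => card_of_mem_conH2) (ne_of_apply_ne Prod.fst h),
    hthird, card_union_of_disjoint (disjoint_product.mpr (Or.inl (disjoint_singleton.mpr h))),
    card_product, card_product]
  simp

theorem codegree_conH2_of_fst_eq {u v : Fin p × Fin m} (h : u.1 = v.1) (huv : u ≠ v) :
    codegree (conH2 p m G) u v = if G.Adj u.2 v.2 then (p - 1) * m else 0 := by
  have hthird : univ.filter (fun w => {u, v, w} ∈ conH2 p m G) =
      if G.Adj u.2 v.2 then (univ.erase u.1) ×ˢ univ else ∅ := by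
    ext w
    simp only [mem_filter, mem_univ, true_and, insert_mem_conH2_iff]
    split_ifs <;> simp only [mem_product, mem_erase, mem_univ, notMem_empty] <;> grind
  rw [codegree_eq_card_filter_insert (fun _ => card_of_mem_conH2) huv, hthird]
  split_ifs <;> simp

end conH2

theorem conH2_no_heavy_copy_general {α : Type*} (F : SimpleGraph α) (hconn : F.Connected)
    (t m p : ℕ) (hodd : Odd t) (hpm : t ≤ (p - 1) * m)
    (G : SimpleGraph (Fin m)) [DecidableRel G.Adj]
    (hreg : G.IsRegularOfDegree ((t - 1) / 2))
    (hfree : ¬ GraphContains F G) :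
    (∀ u v : Fin p × Fin m, u.1 ≠ v.1 →
      ((conH2 p m G).filter (fun A => u ∈ A ∧ v ∈ A)).card = t - 1) ∧
    (∀ u v : Fin p × Fin m, u ≠ v →
      (t ≤ ((conH2 p m G).filter (fun A => u ∈ A ∧ v ∈ A)).card ↔
        u.1 = v.1 ∧ G.Adj u.2 v.2)) ∧
    ¬ HasHeavyCopy (conH2 p m G) F t := by
  have hcross : ∀ u v : Fin p × Fin m, u.1 ≠ v.1 → codegree (conH2 p m G) u v = t - 1 := by
    intro u v h
    obtain ⟨k, rfl⟩ := hodd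
    rw [codegree_conH2_of_fst_ne h, hreg, hreg]
    omega
  have hheavy : ∀ u v : Fin p × Fin m, u ≠ v →
      (t ≤ codegree (conH2 p m G) u v ↔ u.1 = v.1 ∧ G.Adj u.2 v.2) := by
    intro u v huv
    by_cases h : u.1 = v.1
    · rw [codegree_conH2_of_fst_eq h huv]
      split_ifs with hadj
      · simp [h, hadj, hpm]
      · simp [hadj, hodd.pos.ne']
    · rw [hcross u v h]
      simp [h, hodd.pos]
  refine ⟨hcross, hheavy, ?_⟩
  rintro ⟨f, hf⟩
  exact hfree <| graphContains_of_connected_of_embedding_prod hconn f fun x y hxy =>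
    (hheavy _ _ (f.injective.ne hxy.ne)).mp (hf x y hxy)

theorem conH2_no_heavy_copy {α : Type*} (F : SimpleGraph α) (hconn : F.Connected)
    (t m p : ℕ) (ht : 2 ≤ t) (hodd : Odd t) (hp : 2 ≤ p) (hpm : t ≤ (p - 1) * m)
    (G : SimpleGraph (Fin m)) [DecidableRel G.Adj]
    (hreg : G.IsRegularOfDegree ((t - 1) / 2))
    (hfree : ¬ GraphContains F G) :
    (∀ u v : Fin p × Fin m, u.1 ≠ v.1 →
      ((conH2 p m G).filter (fun A => u ∈ A ∧ v ∈ A)).card = t - 1) ∧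
    (∀ u v : Fin p × Fin m, u ≠ v →
      (t ≤ ((conH2 p m G).filter (fun A => u ∈ A ∧ v ∈ A)).card ↔
        u.1 = v.1 ∧ G.Adj u.2 v.2)) ∧
    ¬ HasHeavyCopy (conH2 p m G) F t :=
  conH2_no_heavy_copy_general F hconn t m p hodd hpm G hreg hfree
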